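/- arXiv:1202.1756 — 7 statements merged into one kernel-verified Lean document; each statement's English description precedes it below -/
import Mathlib

section
/- Let f ∈ ℤ[X] be a monic polynomial all of whose complex roots are real, and suppose its span is less than 4. Then there exist ε ∈ {1, −1} and c ∈ ℤ such that the monic integer polynomial g(X) = ε^{deg f}·f(ε·(X − c)), whose roots are exactly the numbers εβ + c as β ranges over the roots of f (with multiplicity), has all of its roots in the half-open interval [−2, 2.5). -/
open Polynomial

/-- A monic totally real integer polynomial of span less than 4 is
equivalent (via some ε ∈ {1, -1} and c ∈ ℤ, sending each root β to εβ + c) to one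
with all roots in [-2, 2.5). -/
theorem stmt_0 (f : ℤ[X]) (hmonic : f.Monic)
    (hreal : ∀ z ∈ (f.map (Int.castRingHom ℂ)).roots, z.im = 0)
    (hspan : ∀ z ∈ (f.map (Int.castRingHom ℂ)).roots,
      ∀ w ∈ (f.map (Int.castRingHom ℂ)).roots, z.re - w.re < 4) :
    ∃ ε : ℤ, (ε = 1 ∨ ε = -1) ∧ ∃ c : ℤ,
      ∀ z ∈ (f.map (Int.castRingHom ℂ)).roots,
        (ε : ℝ) * z.re + (c : ℝ) ∈ Set.Ico (-2 : ℝ) (2.5 : ℝ) := by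
  set R := (f.map (Int.castRingHom ℂ)).roots with hR
  by_cases hne : R = 0
  · exact ⟨1, Or.inl rfl, 0, fun z hz => by simp [hne] at hz⟩
  · set S := (R.map Complex.re).toFinset with hS
    have hSne : S.Nonempty := by
      obtain ⟨z, hz⟩ := Multiset.exists_mem_of_ne_zero hne
      exact ⟨z.re, by simpa [hS] using Multiset.mem_map_of_mem Complex.re hz⟩
    set m := S.min' hSne with hm
    set M := S.max' hSne with hM
    have hmem : ∀ z ∈ R, m ≤ z.re ∧ z.re ≤ M := by
      intro z hz
      have hzS : z.re ∈ S := by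
        simpa [hS] using Multiset.mem_map_of_mem Complex.re hz
      exact ⟨S.min'_le _ hzS, S.le_max' _ hzS⟩
    -- M and m come from actual roots
    obtain ⟨zM, hzM, hzMre⟩ : ∃ z ∈ R, z.re = M := by
      have h : M ∈ Multiset.map Complex.re R := Multiset.mem_toFinset.mp (S.max'_mem hSne)
      simpa using h
    obtain ⟨zm, hzm, hzmre⟩ : ∃ z ∈ R, z.re = m := by
      have h : m ∈ Multiset.map Complex.re R := Multiset.mem_toFinset.mp (S.min'_mem hSne)
      simpa using h
    have hspan' : M - m < 4 := by
      have := hspan zM hzM zm hzm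
      rwa [hzMre, hzmre] at this
    set k : ℤ := ⌈(-2 : ℝ) - m⌉ with hk
    have hk1 : (-2 : ℝ) - m ≤ k := Int.le_ceil _
    have hk2 : (k : ℝ) < (-2 - m) + 1 := Int.ceil_lt_add_one _
    by_cases hcase : (k : ℝ) < 2.5 - M
    · refine ⟨1, Or.inl rfl, k, fun z hz => ?_⟩
      obtain ⟨h1, h2⟩ := hmem z hz
      constructor
      · push_cast; nlinarith
      · push_cast; nlinarith
    · push_neg at hcase
      refine ⟨-1, Or.inr rfl, 1 - k, fun z hz => ?_⟩
      obtain ⟨h1, h2⟩ := hmem z hz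
      constructor
      · push_cast; nlinarith
      · push_cast; nlinarith
end

section
/- Let A be an n×n complex Hermitian matrix whose span is less than 4 and all of whose eigenvalues lie in the interval [−2, 2.5). Then every diagonal entry a of A satisfies |a| < 2.5, and every off-diagonal entry b of A satisfies |b| < 2. -/
/-! The spectral theorem writes `A i j = ∑ k, U i k * λ k * conj (U j k)` with `U` unitary.
For `i = j` this is a convex combination of the eigenvalues, so it lies in `[-2, 2.5)`.
For `i ≠ j` the rows `i` and `j` of `U` are orthogonal, so every `λ k` may be replaced by
`λ k - c` with `c` the midpoint of the spectrum; then `|λ k - c|` is at most half the span,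
which is `< 2`, and `∑ k, |U i k| |U j k| ≤ 1` by AM-GM. -/

open Finset

theorem norm_sum_mul_ofReal_mul_star_le {𝕜 ι : Type*} [RCLike 𝕜] [Fintype ι] {u v : ι → 𝕜}
    (hu : ∑ k, ‖u k‖ ^ 2 = 1) (hv : ∑ k, ‖v k‖ ^ 2 = 1) {μ : ι → ℝ} {r : ℝ}
    (hμ : ∀ k, |μ k| ≤ r) : ‖∑ k, u k * (μ k : 𝕜) * star (v k)‖ ≤ r := by
  obtain ⟨k₀, -, -⟩ := exists_ne_zero_of_sum_ne_zero (hu.trans_ne one_ne_zero)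
  have hr : 0 ≤ r := (abs_nonneg _).trans (hμ k₀)
  have hamgm : ∑ k, ‖u k‖ * ‖v k‖ ≤ 1 := by
    have h := sum_le_sum fun k (_ : k ∈ univ) => two_mul_le_add_sq ‖u k‖ ‖v k‖
    rw [sum_add_distrib, hu, hv] at h
    simp only [mul_assoc, ← mul_sum] at h
    linarith
  calc ‖∑ k, u k * (μ k : 𝕜) * star (v k)‖
      ≤ ∑ k, ‖u k * (μ k : 𝕜) * star (v k)‖ := norm_sum_le _ _
    _ = ∑ k, |μ k| * (‖u k‖ * ‖v k‖) := by
        refine sum_congr rfl fun k _ => ?_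
        rw [norm_mul, norm_mul, RCLike.norm_ofReal, norm_star]; ring
    _ ≤ ∑ k, r * (‖u k‖ * ‖v k‖) :=
        sum_le_sum fun k _ => mul_le_mul_of_nonneg_right (hμ k) (by positivity)
    _ ≤ r := by rw [← mul_sum]; exact mul_le_of_le_one_right hr hamgm

namespace Matrix.IsHermitian

variable {𝕜 ι : Type*} [RCLike 𝕜] [Fintype ι] [DecidableEq ι] {A : Matrix ι ι 𝕜}
  (hA : A.IsHermitian)

local notation "U" => (hA.eigenvectorUnitary : Matrix ι ι 𝕜)

theorem sum_eigenvectorUnitary_mul_star (i j : ι) :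
    ∑ k, U i k * star (U j k) = (1 : Matrix ι ι 𝕜) i j := by
  rw [← Unitary.coe_mul_star_self hA.eigenvectorUnitary, mul_apply]
  rfl

theorem sum_norm_sq_eigenvectorUnitary (i : ι) : ∑ k, ‖U i k‖ ^ 2 = 1 := by
  have h := hA.sum_eigenvectorUnitary_mul_star i i
  rw [one_apply_eq] at h
  have h' : ((∑ k, ‖U i k‖ ^ 2 : ℝ) : 𝕜) = 1 := by
    push_cast
    rw [← h]
    simp [RCLike.mul_conj]
  exact_mod_cast h'

theorem apply_eq_sum_eigenvalues (i j : ι) :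
    A i j = ∑ k, U i k * (hA.eigenvalues k : 𝕜) * star (U j k) := by
  conv_lhs => rw [hA.spectral_theorem, Unitary.conjStarAlgAut_apply]
  rw [mul_apply]
  refine sum_congr rfl fun k _ => ?_
  rw [mul_diagonal]
  rfl

theorem re_apply_self_mem {s : Set ℝ} (hs : Convex ℝ s) (h : ∀ k, hA.eigenvalues k ∈ s)
    (i : ι) : RCLike.re (A i i) ∈ s := by
  have hdiag : A i i = ((∑ k, ‖U i k‖ ^ 2 * hA.eigenvalues k : ℝ) : 𝕜) := by
    rw [hA.apply_eq_sum_eigenvalues]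
    push_cast
    refine sum_congr rfl fun k _ => ?_
    rw [mul_right_comm, RCLike.star_def, RCLike.mul_conj]
  rw [hdiag, RCLike.ofReal_re]
  exact hs.sum_mem (fun k _ => by positivity) (hA.sum_norm_sq_eigenvectorUnitary i)
    fun k _ => h k

theorem norm_apply_le_of_ne {a b : ℝ} (h : ∀ k, hA.eigenvalues k ∈ Set.Icc a b) {i j : ι}
    (hij : i ≠ j) : ‖A i j‖ ≤ (b - a) / 2 := by
  set c := (a + b) / 2 with hc
  have hshift : A i j = ∑ k, U i k * ((hA.eigenvalues k - c : ℝ) : 𝕜) * star (U j k) := by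
    have horth := hA.sum_eigenvectorUnitary_mul_star i j
    rw [one_apply_ne hij] at horth
    simp only [RCLike.ofReal_sub, mul_sub, sub_mul, sum_sub_distrib, mul_right_comm _ (c : 𝕜),
      ← sum_mul, horth, zero_mul, sub_zero, hA.apply_eq_sum_eigenvalues]
  rw [hshift]
  refine norm_sum_mul_ofReal_mul_star_le (hA.sum_norm_sq_eigenvectorUnitary i)
    (hA.sum_norm_sq_eigenvectorUnitary j) fun k => abs_le.mpr ⟨?_, ?_⟩ <;>
  linarith [(h k).1, (h k).2, hc]

end Matrix.IsHermitian

/-- a small-span Hermitian matrix with all eigenvalues in [-2, 2.5)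
has all diagonal entries of absolute value < 2.5 and all off-diagonal entries of
absolute value < 2. -/
theorem stmt_2 (n : ℕ) (A : Matrix (Fin n) (Fin n) ℂ) (hA : A.IsHermitian)
    (hspan : ∀ i j, hA.eigenvalues i - hA.eigenvalues j < 4)
    (heig : ∀ i, hA.eigenvalues i ∈ Set.Ico (-2 : ℝ) (2.5 : ℝ)) :
    (∀ i, ‖A i i‖ < 2.5) ∧
    (∀ i j, i ≠ j → ‖A i j‖ < 2) := by
  constructor
  · intro i
    have hre := hA.re_apply_self_mem (convex_Ico _ _) heig i
    rw [← hA.coe_re_apply_self i, RCLike.norm_ofReal, abs_lt]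
    constructor <;> linarith [hre.1, hre.2]
  · intro i j hij
    have : Nonempty (Fin n) := ⟨i⟩
    obtain ⟨kmax, hkmax⟩ := Finite.exists_max hA.eigenvalues
    obtain ⟨kmin, hkmin⟩ := Finite.exists_min hA.eigenvalues
    have hle := hA.norm_apply_le_of_ne (fun k => ⟨hkmin k, hkmax k⟩) hij
    linarith [hspan kmax kmin]
end

section
/- Let A be an n×n Hermitian matrix with entries in ℤ[ω] all of whose eigenvalues lie in the interval [−2, 2.5) and whose span is less than 4. Then each row of A has at most 4 nonzero entries. -/
/-!
Shift `A` by the midpoint `c` of its spectrum. The eigenvalues of `B = A - c` have absolute value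
at most `r = span / 2 < 2`, and if `U` is the unitary diagonalising `A`, the squared length of the
`i`-th row of `B` is `(B Bᴴ)ᵢᵢ = ∑ₖ (λₖ - c)² |Uᵢₖ|² ≤ r² < 4`. Off the diagonal, row `i` of `B`
is row `i` of `A`, and a nonzero Eisenstein integer `a + bω` has `|a + bω|² = a² - ab + b² ≥ 1`,
so at most three off-diagonal entries of the row are nonzero.
-/

open Complex ComplexConjugate Matrix Finset

namespace IsPrimitiveRoot

variable {ζ : ℂ} (hζ : IsPrimitiveRoot ζ 3)
include hζ

lemma sq_add_self_add_one : ζ ^ 2 + ζ + 1 = 0 := by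
  have h := hζ.geom_sum_eq_zero (by norm_num)
  simp only [sum_range_succ, sum_range_zero, pow_zero, pow_one, zero_add] at h
  linear_combination h

lemma mul_conj_self : ζ * conj ζ = 1 := by
  rw [mul_conj, normSq_eq_norm_sq, hζ.norm'_eq_one (by norm_num)]; simp

lemma add_conj_self : ζ + conj ζ = -1 := by
  linear_combination conj ζ * hζ.sq_add_self_add_one - (ζ + 1) * hζ.mul_conj_self

lemma exists_eq_int_add_int_mul {z : ℂ} (hz : z ∈ Subring.closure {ζ}) :
    ∃ a b : ℤ, z = a + b * ζ := by
  induction hz using Subring.closure_induction with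
  | mem x hx => exact ⟨0, 1, by simp [Set.mem_singleton_iff.mp hx]⟩
  | zero => exact ⟨0, 0, by simp⟩
  | one => exact ⟨1, 0, by simp⟩
  | add x y _ _ hx hy =>
    obtain ⟨a, b, rfl⟩ := hx
    obtain ⟨c, d, rfl⟩ := hy
    exact ⟨a + c, b + d, by push_cast; ring⟩
  | neg x _ hx =>
    obtain ⟨a, b, rfl⟩ := hx
    exact ⟨-a, -b, by push_cast; ring⟩
  | mul x y _ _ hx hy =>
    obtain ⟨a, b, rfl⟩ := hx
    obtain ⟨c, d, rfl⟩ := hy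
    exact ⟨a * c - b * d, a * d + b * c - b * d, by
      push_cast; linear_combination (b * d : ℂ) * hζ.sq_add_self_add_one⟩

lemma normSq_int_add_int_mul (a b : ℤ) : normSq (a + b * ζ) = a ^ 2 - a * b + b ^ 2 := by
  apply ofReal_injective
  rw [← mul_conj]
  push_cast
  simp only [map_add, map_mul, map_intCast]
  linear_combination (a * b : ℂ) * hζ.add_conj_self + (b ^ 2 : ℂ) * hζ.mul_conj_self

lemma one_le_norm_of_mem_closure {z : ℂ} (hz : z ∈ Subring.closure {ζ}) (hz0 : z ≠ 0) :
    1 ≤ ‖z‖ := by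
  obtain ⟨a, b, rfl⟩ := hζ.exists_eq_int_add_int_mul hz
  have hab : a ≠ 0 ∨ b ≠ 0 := by
    by_contra! h
    simp [h.1, h.2] at hz0
  have hnorm : 1 ≤ a ^ 2 - a * b + b ^ 2 := by
    rcases hab with ha | hb
    · nlinarith [sq_nonneg (a - 2 * b), Int.one_le_abs ha, abs_mul_abs_self a]
    · nlinarith [sq_nonneg (2 * a - b), Int.one_le_abs hb, abs_mul_abs_self b]
  rw [← one_le_sq_iff₀ (norm_nonneg _), ← normSq_eq_norm_sq, hζ.normSq_int_add_int_mul]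
  exact_mod_cast hnorm

end IsPrimitiveRoot

namespace Matrix

variable {𝕜 : Type*} [RCLike 𝕜] {n : Type*} [Fintype n] [DecidableEq n]

omit [DecidableEq n] in
lemma ofReal_sum_norm_sq_apply (B : Matrix n n 𝕜) (i : n) :
    ((∑ j, ‖B i j‖ ^ 2 : ℝ) : 𝕜) = (B * Bᴴ) i i := by
  simp [mul_apply, RCLike.mul_conj]

lemma sum_norm_sq_conj_diagonal_apply {U : Matrix n n 𝕜} (hU : U ∈ unitary (Matrix n n 𝕜))
    (d : n → 𝕜) (i : n) :
    ∑ j, ‖(U * diagonal d * star U) i j‖ ^ 2 = ∑ k, ‖d k‖ ^ 2 * ‖U i k‖ ^ 2 := by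
  have hconj : (U * diagonal d * star U) * (U * diagonal d * star U)ᴴ
      = U * diagonal (fun k => ((‖d k‖ ^ 2 : ℝ) : 𝕜)) * star U := by
    rw [← star_eq_conjTranspose, star_mul, star_mul, star_star, star_eq_conjTranspose (diagonal d),
      diagonal_conjTranspose]
    simp only [Matrix.mul_assoc]
    rw [← Matrix.mul_assoc (star U) U, Unitary.star_mul_self_of_mem hU, Matrix.one_mul,
      ← Matrix.mul_assoc (diagonal d), diagonal_mul_diagonal]
    congr 3
    ext k
    simp [RCLike.mul_conj]
  apply RCLike.ofReal_injective (K := 𝕜)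
  rw [ofReal_sum_norm_sq_apply, hconj, mul_apply]
  push_cast
  refine Finset.sum_congr rfl fun k _ => ?_
  rw [mul_diagonal, star_apply, RCLike.star_def, mul_right_comm, RCLike.mul_conj, mul_comm]

lemma sum_norm_sq_apply_of_mem_unitary {U : Matrix n n 𝕜} (hU : U ∈ unitary (Matrix n n 𝕜))
    (i : n) : ∑ k, ‖U i k‖ ^ 2 = 1 := by
  have h := sum_norm_sq_conj_diagonal_apply hU (fun _ => 1) i
  rw [diagonal_one, Matrix.mul_one, Unitary.mul_star_self_of_mem hU] at h
  simpa [one_apply, apply_ite (‖·‖ ^ 2)] using h.symm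

lemma sum_norm_sq_conj_diagonal_apply_le {U : Matrix n n 𝕜} (hU : U ∈ unitary (Matrix n n 𝕜))
    {d : n → 𝕜} {r : ℝ} (hd : ∀ k, ‖d k‖ ≤ r) (i : n) :
    ∑ j, ‖(U * diagonal d * star U) i j‖ ^ 2 ≤ r ^ 2 :=
  calc ∑ j, ‖(U * diagonal d * star U) i j‖ ^ 2 = ∑ k, ‖d k‖ ^ 2 * ‖U i k‖ ^ 2 :=
        sum_norm_sq_conj_diagonal_apply hU d i
    _ ≤ ∑ k, r ^ 2 * ‖U i k‖ ^ 2 := by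
        gcongr with k
        exact hd k
    _ = r ^ 2 := by rw [← mul_sum, sum_norm_sq_apply_of_mem_unitary hU, mul_one]

namespace IsHermitian

variable {A : Matrix n n 𝕜} (hA : A.IsHermitian)
include hA

lemma sub_smul_one_eq (c : ℝ) :
    A - (c : 𝕜) • 1 = (hA.eigenvectorUnitary : Matrix n n 𝕜) *
      diagonal (fun k => (hA.eigenvalues k : 𝕜) - c) *
        star (hA.eigenvectorUnitary : Matrix n n 𝕜) := by
  set U := (hA.eigenvectorUnitary : Matrix n n 𝕜)
  have hc : (c : 𝕜) • (1 : Matrix n n 𝕜) = U * diagonal (fun _ => (c : 𝕜)) * star U := by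
    rw [← smul_one_eq_diagonal, Matrix.mul_smul, Matrix.mul_one, Matrix.smul_mul,
      Unitary.mul_star_self_of_mem hA.eigenvectorUnitary.2]
  conv_lhs => rw [hA.spectral_theorem, Unitary.conjStarAlgAut_apply, hc]
  rw [← Matrix.sub_mul, ← Matrix.mul_sub, diagonal_sub]
  rfl

lemma sum_norm_sq_sub_smul_one_apply_le {c r : ℝ} (h : ∀ k, |hA.eigenvalues k - c| ≤ r) (i : n) :
    ∑ j, ‖(A - (c : 𝕜) • 1) i j‖ ^ 2 ≤ r ^ 2 := by
  rw [hA.sub_smul_one_eq c]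
  exact sum_norm_sq_conj_diagonal_apply_le hA.eigenvectorUnitary.2
    (fun k => by rw [← RCLike.ofReal_sub, RCLike.norm_ofReal]; exact h k) i

lemma sum_erase_norm_sq_apply_le {c r : ℝ} (h : ∀ k, |hA.eigenvalues k - c| ≤ r) (i : n) :
    ∑ j ∈ univ.erase i, ‖A i j‖ ^ 2 ≤ r ^ 2 :=
  calc ∑ j ∈ univ.erase i, ‖A i j‖ ^ 2 = ∑ j ∈ univ.erase i, ‖(A - (c : 𝕜) • 1) i j‖ ^ 2 :=
        sum_congr rfl fun j hj => by simp [(ne_of_mem_erase hj).symm]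
    _ ≤ ∑ j, ‖(A - (c : 𝕜) • 1) i j‖ ^ 2 :=
        sum_le_sum_of_subset_of_nonneg (erase_subset i univ) fun _ _ _ => by positivity
    _ ≤ r ^ 2 := hA.sum_norm_sq_sub_smul_one_apply_le h i

end IsHermitian

end Matrix

lemma exists_forall_abs_sub_le_of_forall_sub_lt {ι : Type*} [Finite ι] [Nonempty ι]
    {e : ι → ℝ} {δ : ℝ} (h : ∀ i j, e i - e j < δ) :
    ∃ c r : ℝ, 0 ≤ r ∧ 2 * r < δ ∧ ∀ k, |e k - c| ≤ r := by
  obtain ⟨M, hM⟩ := Finite.exists_max e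
  obtain ⟨m, hm⟩ := Finite.exists_min e
  refine ⟨(e M + e m) / 2, (e M - e m) / 2, by linarith [hm M], by linarith [h M m], fun k => ?_⟩
  rw [abs_sub_le_iff]
  constructor <;> linarith [hM k, hm k]

lemma card_filter_ne_zero_le_sum_norm_sq {ι E : Type*} [NormedAddCommGroup E] [DecidableEq E]
    {s : Finset ι} {v : ι → E} (hv : ∀ j ∈ s, v j ≠ 0 → 1 ≤ ‖v j‖) :
    (#{j ∈ s | v j ≠ 0} : ℝ) ≤ ∑ j ∈ s, ‖v j‖ ^ 2 :=
  calc (#{j ∈ s | v j ≠ 0} : ℝ) = ∑ j ∈ s with v j ≠ 0, 1 := by simp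
    _ ≤ ∑ j ∈ s with v j ≠ 0, ‖v j‖ ^ 2 := sum_le_sum fun j hj => by
        rw [mem_filter] at hj
        exact one_le_pow₀ (hv j hj.1 hj.2)
    _ ≤ ∑ j ∈ s, ‖v j‖ ^ 2 :=
        sum_le_sum_of_subset_of_nonneg (filter_subset _ _) fun _ _ _ => by positivity

lemma ncard_setOf_ne_zero_le_card_erase_add_one {ι E : Type*} [Fintype ι] [DecidableEq ι] [Zero E]
    [DecidableEq E] (v : ι → E) (i : ι) :
    {j | v j ≠ 0}.ncard ≤ #{j ∈ univ.erase i | v j ≠ 0} + 1 := by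
  rw [Set.ncard_eq_toFinset_card', Set.toFinset_ofPred, filter_erase]
  have := pred_card_le_card_erase (s := {j | v j ≠ 0}) (a := i)
  omega

theorem stmt_3_general (n : ℕ) (A : Matrix (Fin n) (Fin n) ℂ) (hA : A.IsHermitian)
    (hent : ∀ i j, A i j ∈ Subring.closure
      ({Complex.exp (2 * Real.pi * Complex.I / 3)} : Set ℂ))
    (hspan : ∀ i j, hA.eigenvalues i - hA.eigenvalues j < 4) :
    ∀ i, {j | A i j ≠ 0}.ncard ≤ 4 := by
  intro i
  have hω : IsPrimitiveRoot (Complex.exp (2 * Real.pi * Complex.I / 3)) 3 := by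
    simpa using Complex.isPrimitiveRoot_exp 3 (by norm_num)
  have : Nonempty (Fin n) := ⟨i⟩
  obtain ⟨c, r, hr0, hr, hc⟩ := exists_forall_abs_sub_le_of_forall_sub_lt hspan
  have hoff : ∑ j ∈ univ.erase i, ‖A i j‖ ^ 2 < 4 :=
    (hA.sum_erase_norm_sq_apply_le hc i).trans_lt (by nlinarith)
  have hcard : #{j ∈ univ.erase i | A i j ≠ 0} < 4 := by
    have := card_filter_ne_zero_le_sum_norm_sq (s := univ.erase i)
      fun j _ => hω.one_le_norm_of_mem_closure (hent i j)
    exact_mod_cast this.trans_lt hoff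
  have := ncard_setOf_ne_zero_le_card_erase_add_one (A i) i
  omega

/-- a small-span Hermitian matrix over the Eisenstein integers
ℤ[ω] (ω = e^{2πi/3}) with all eigenvalues in [-2, 2.5) has at most 4 nonzero
entries in each row. -/
theorem stmt_3 (n : ℕ) (A : Matrix (Fin n) (Fin n) ℂ) (hA : A.IsHermitian)
    (hent : ∀ i j, A i j ∈ Subring.closure
      ({Complex.exp (2 * Real.pi * Complex.I / 3)} : Set ℂ))
    (heig : ∀ i, hA.eigenvalues i ∈ Set.Ico (-2 : ℝ) (2.5 : ℝ))
    (hspan : ∀ i j, hA.eigenvalues i - hA.eigenvalues j < 4) :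
    ∀ i, {j | A i j ≠ 0}.ncard ≤ 4 :=
  stmt_3_general n A hA hent hspan
end

section
/- Let n ≥ 3 and let α ∈ ℂ with |α|² = 2. Let A be the n×n Hermitian matrix with A_{1,2} = α, A_{2,1} = conj(α), A_{j,j+1} = A_{j+1,j} = 1 for 2 ≤ j ≤ n−1, A_{n,n} = 1, and all other entries 0. Then every eigenvalue of A lies in the half-open interval (−2, 2]; in particular the span of A is less than 4. -/
/-!
For `x ∈ ℂⁿ` and `|α|² = 2` the quadratic form of `𝒫ₙ` satisfies two sum-of-squares identities
  `2‖x‖² - x*Ax = |x₁ - ᾱx₀|² + ∑_{1 ≤ i < n-1} |xᵢ₊₁ - xᵢ|²`,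
  `2‖x‖² + x*Ax = |x₁ + ᾱx₀|² + ∑_{1 ≤ i < n-1} |xᵢ₊₁ + xᵢ|² + 2|xₙ₋₁|²`:
the weight `|α|² = 2` on the first edge and the charge on the last vertex are exactly what balance
the diagonal terms. So the Rayleigh quotient lies in `[-2, 2]`, and it can only be `-2` if
`xₙ₋₁ = 0` and `xᵢ₊₁ = -w̄ᵢ xᵢ` for every edge weight `wᵢ`, which propagates back to `x = 0`.
-/

open Finset Matrix ComplexConjugate Complex

theorem Matrix.IsHermitian.eigenvalues_mem_Ioc_of_forall {𝕜 ι : Type*} [RCLike 𝕜] [Fintype ι]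
    [DecidableEq ι] {A : Matrix ι ι 𝕜} (hA : A.IsHermitian) {a b : ℝ}
    (h : ∀ v : ι → 𝕜, v ≠ 0 → RCLike.re (star v ⬝ᵥ A *ᵥ v) ∈
      Set.Ioc (a * RCLike.re (star v ⬝ᵥ v)) (b * RCLike.re (star v ⬝ᵥ v))) (i : ι) :
    hA.eigenvalues i ∈ Set.Ioc a b := by
  have hv : star ⇑(hA.eigenvectorBasis i) ⬝ᵥ ⇑(hA.eigenvectorBasis i) = 1 := by
    rw [dotProduct_comm, ← EuclideanSpace.inner_eq_star_dotProduct]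
    simp
  have hv0 : ⇑(hA.eigenvectorBasis i) ≠ 0 := fun h0 => by simp [h0] at hv
  simpa [hA.eigenvalues_eq, hv] using h _ hv0

theorem Matrix.star_dotProduct_conjTranspose_mulVec {ι R : Type*} [Fintype ι] [CommSemiring R]
    [StarRing R] (M : Matrix ι ι R) (v : ι → R) :
    star v ⬝ᵥ Mᴴ *ᵥ v = star (star v ⬝ᵥ M *ᵥ v) := by
  rw [mulVec_conjTranspose, dotProduct_star, star_star, dotProduct_mulVec]

theorem eq_zero_of_forall_succ_add_mul_eq_zero {R : Type*} [NonUnitalNonAssocSemiring R]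
    [NoZeroDivisors R] {w x : ℕ → R} {m : ℕ} (hw : ∀ i, w i ≠ 0)
    (h : ∀ i < m, x (i + 1) + w i * x i = 0)
    (hxm : x m = 0) {i : ℕ} (hi : i ≤ m) : x i = 0 := by
  induction hi using Nat.decreasingInduction with
  | self => exact hxm
  | of_succ k hk ih =>
    have hk' := h k hk
    rw [ih, zero_add, mul_eq_zero] at hk'
    exact hk'.resolve_left (hw k)

def pathWeight (α : ℂ) (i : ℕ) : ℂ := if i = 0 then α else 1

theorem pathWeight_ne_zero {α : ℂ} (hα : α ≠ 0) (i : ℕ) : pathWeight α i ≠ 0 := by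
  unfold pathWeight; split_ifs <;> simp [hα]

theorem sum_normSq_pathWeight_mul {α : ℂ} (hα : normSq α = 2) (f : ℕ → ℝ) {m : ℕ} (hm : 0 < m) :
    ∑ i ∈ range m, normSq (pathWeight α i) * f i = ∑ i ∈ range m, f i + f 0 := by
  obtain ⟨k, rfl⟩ : ∃ k, m = k + 1 := ⟨m - 1, by omega⟩
  rw [sum_range_succ', sum_range_succ' f]
  simp only [pathWeight, Nat.add_eq_zero_iff, one_ne_zero, and_false, if_false, if_true, map_one,
    one_mul, hα]
  ring

def edgeSum (w x : ℕ → ℂ) (m : ℕ) : ℂ := ∑ i ∈ range m, conj (x i) * w i * x (i + 1)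

theorem sum_normSq_succ_add_mul (w x : ℕ → ℂ) (s : ℝ) (m : ℕ) :
    ∑ i ∈ range m, normSq (x (i + 1) + s * (conj (w i) * x i)) =
      ∑ i ∈ range m, normSq (x (i + 1)) + s ^ 2 * ∑ i ∈ range m, normSq (w i) * normSq (x i) +
        2 * s * (edgeSum w x m).re := by
  rw [edgeSum, re_sum, mul_sum, mul_sum, ← sum_add_distrib, ← sum_add_distrib]
  refine sum_congr rfl fun i _ => ?_
  rw [normSq_add, normSq_mul, normSq_mul, normSq_ofReal, normSq_conj]
  simp only [map_mul, conj_conj, conj_ofReal, mul_re, mul_im, ofReal_re, ofReal_im, conj_re,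
    conj_im]
  ring

def templateForm (α : ℂ) (m : ℕ) (x : ℕ → ℂ) : ℝ :=
  2 * (edgeSum (pathWeight α) x m).re + normSq (x m)

theorem two_mul_sum_sub_templateForm {α : ℂ} (hα : normSq α = 2) {m : ℕ} (hm : 0 < m)
    (x : ℕ → ℂ) :
    2 * ∑ i ∈ range (m + 1), normSq (x i) - templateForm α m x =
      ∑ i ∈ range m, normSq (x (i + 1) - conj (pathWeight α i) * x i) := by
  have hexpand := sum_normSq_succ_add_mul (pathWeight α) x (-1) m
  rw [sum_normSq_pathWeight_mul hα _ hm] at hexpand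
  simp only [ofReal_neg, ofReal_one, neg_one_mul, ← sub_eq_add_neg] at hexpand
  have h₁ := sum_range_succ' (fun i => normSq (x i)) m
  have h₂ := sum_range_succ (fun i => normSq (x i)) m
  rw [hexpand, templateForm]
  linarith

theorem two_mul_sum_add_templateForm {α : ℂ} (hα : normSq α = 2) {m : ℕ} (hm : 0 < m)
    (x : ℕ → ℂ) :
    2 * ∑ i ∈ range (m + 1), normSq (x i) + templateForm α m x =
      ∑ i ∈ range m, normSq (x (i + 1) + conj (pathWeight α i) * x i) + 2 * normSq (x m) := by
  have hexpand := sum_normSq_succ_add_mul (pathWeight α) x 1 m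
  rw [sum_normSq_pathWeight_mul hα _ hm] at hexpand
  simp only [ofReal_one, one_mul] at hexpand
  have h₁ := sum_range_succ' (fun i => normSq (x i)) m
  have h₂ := sum_range_succ (fun i => normSq (x i)) m
  rw [hexpand, templateForm]
  linarith

theorem templateForm_mem_Ioc {α : ℂ} (hα : normSq α = 2) {m : ℕ} (hm : 0 < m) {x : ℕ → ℂ}
    (hx : ∃ i ≤ m, x i ≠ 0) :
    templateForm α m x ∈ Set.Ioc (-2 * ∑ i ∈ range (m + 1), normSq (x i))
      (2 * ∑ i ∈ range (m + 1), normSq (x i)) := by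
  have hsub := two_mul_sum_sub_templateForm hα hm x
  have hadd := two_mul_sum_add_templateForm hα hm x
  have hsq {z : ℕ → ℂ} : 0 ≤ ∑ i ∈ range m, normSq (z i) := sum_nonneg fun _ _ => normSq_nonneg _
  refine ⟨?_, by linarith [hsq (z := fun i => x (i + 1) - conj (pathWeight α i) * x i)]⟩
  by_contra! hle
  have hedges_sq := hsq (z := fun i => x (i + 1) + conj (pathWeight α i) * x i)
  have hxm : x m = 0 := normSq_eq_zero.1 (by linarith [normSq_nonneg (x m)])
  have hzero : ∑ i ∈ range m, normSq (x (i + 1) + conj (pathWeight α i) * x i) = 0 := by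
    linarith [normSq_nonneg (x m)]
  have hedges : ∀ i < m, x (i + 1) + conj (pathWeight α i) * x i = 0 := fun i hi =>
    normSq_eq_zero.1 <| (sum_eq_zero_iff_of_nonneg fun _ _ => normSq_nonneg _).1 hzero i
      (mem_range.2 hi)
  have hα0 : α ≠ 0 := by rintro rfl; norm_num at hα
  obtain ⟨i, hi, hxi⟩ := hx
  exact hxi <| eq_zero_of_forall_succ_add_mul_eq_zero
    (fun i => (map_ne_zero _).2 (pathWeight_ne_zero hα0 i)) hedges hxm hi

def pathEdgeMatrix (w : ℕ → ℂ) (n : ℕ) : Matrix (Fin n) (Fin n) ℂ :=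
  of fun i j => if (j : ℕ) = i + 1 then w i else 0

theorem star_dotProduct_pathEdgeMatrix_mulVec (w x : ℕ → ℂ) (m : ℕ) :
    star (fun i : Fin (m + 1) => x i) ⬝ᵥ pathEdgeMatrix w (m + 1) *ᵥ (fun i => x i) =
      edgeSum w x m := by
  have hrow (i : ℕ) : ∑ j : Fin (m + 1), (if (j : ℕ) = i + 1 then w i * x j else 0) =
      if i + 1 ∈ range (m + 1) then w i * x (i + 1) else 0 := by
    rw [Fin.sum_univ_eq_sum_range (fun j => if j = i + 1 then w i * x j else 0), sum_ite_eq']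
  simp only [dotProduct, mulVec, pathEdgeMatrix, of_apply, Pi.star_apply, ite_mul, zero_mul,
    hrow]
  rw [Fin.sum_univ_eq_sum_range
      (fun i => star (x i) * if i + 1 ∈ range (m + 1) then w i * x (i + 1) else 0),
    sum_range_succ, if_neg (by simp), mul_zero, add_zero, edgeSum]
  refine sum_congr rfl fun i hi => ?_
  rw [if_pos (by simpa using hi), ← mul_assoc]
  rfl

/-- `𝒫ₘ₊₁` on the vertices `0, …, m`: entry `(i, i + 1)` is the weight `pathWeight α i`. -/
def templateMatrix (α : ℂ) (m : ℕ) : Matrix (Fin (m + 1)) (Fin (m + 1)) ℂ :=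
  pathEdgeMatrix (pathWeight α) (m + 1) + (pathEdgeMatrix (pathWeight α) (m + 1))ᴴ +
    diagonal (Pi.single (Fin.last m) 1)

theorem re_star_dotProduct_templateMatrix_mulVec (α : ℂ) (m : ℕ) (x : ℕ → ℂ) :
    (star (fun i : Fin (m + 1) => x i) ⬝ᵥ templateMatrix α m *ᵥ (fun i => x i)).re =
      templateForm α m x := by
  have hcharge : star (fun i : Fin (m + 1) => x i) ⬝ᵥ
      diagonal (Pi.single (Fin.last m) 1) *ᵥ (fun i => x i) = conj (x m) * x m := by
    simp [dotProduct, mulVec_diagonal, Pi.single_apply]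
  rw [templateMatrix, add_mulVec, add_mulVec, dotProduct_add, dotProduct_add,
    star_dotProduct_conjTranspose_mulVec, star_dotProduct_pathEdgeMatrix_mulVec, hcharge,
    ← normSq_eq_conj_mul_self, add_re, add_re, RCLike.star_def, conj_re, ofReal_re, templateForm]
  ring

theorem re_star_dotProduct_self (m : ℕ) (x : ℕ → ℂ) :
    (star (fun i : Fin (m + 1) => x i) ⬝ᵥ (fun i => x i)).re =
      ∑ i ∈ range (m + 1), normSq (x i) := by
  simp [dotProduct, ← Fin.sum_univ_eq_sum_range, normSq_apply]

/-- the template 𝒫ₙ (path with first edge-weight α, |α|² = 2, remaining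
edge-weights 1, and charge +1 on the last vertex) has all eigenvalues in (-2, 2];
in particular it has span less than 4. -/
theorem stmt_6 (n : ℕ) (hn : 3 ≤ n) (α : ℂ) (hα : ‖α‖ ^ 2 = 2)
    (A : Matrix (Fin n) (Fin n) ℂ)
    (hAdef : ∀ i j : Fin n, A i j =
      if (i : ℕ) = 0 ∧ (j : ℕ) = 1 then α
      else if (i : ℕ) = 1 ∧ (j : ℕ) = 0 then starRingEnd ℂ α
      else if 1 ≤ (i : ℕ) ∧ (j : ℕ) = (i : ℕ) + 1 then 1
      else if 1 ≤ (j : ℕ) ∧ (i : ℕ) = (j : ℕ) + 1 then 1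
      else if (i : ℕ) = n - 1 ∧ (j : ℕ) = n - 1 then 1
      else 0)
    (hA : A.IsHermitian) :
    (∀ i, hA.eigenvalues i ∈ Set.Ioc (-2 : ℝ) 2) ∧
    (∀ i j, hA.eigenvalues i - hA.eigenvalues j < 4) := by
  obtain ⟨m, rfl⟩ : ∃ m, n = m + 1 := ⟨n - 1, by omega⟩
  have hA_eq : A = templateMatrix α m := by
    ext i j
    rw [hAdef]
    simp only [templateMatrix, pathEdgeMatrix, pathWeight, Matrix.add_apply, conjTranspose_apply,
      of_apply, diagonal_apply, Pi.single_apply, Fin.ext_iff, Fin.val_last]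
    split_ifs <;> (try simp) <;> omega
  subst hA_eq
  have hbounds := hA.eigenvalues_mem_Ioc_of_forall (a := -2) (b := 2) fun v hv => by
    obtain ⟨i, hi⟩ := Function.ne_iff.1 hv
    set x : ℕ → ℂ := fun k => v (Fin.ofNat (m + 1) k)
    have hx : (fun i : Fin (m + 1) => x i) = v := funext fun i => by simp [x]
    rw [← hx]
    simp only [RCLike.re_to_complex, re_star_dotProduct_templateMatrix_mulVec,
      re_star_dotProduct_self]
    exact templateForm_mem_Ioc (by rwa [← Complex.sq_norm]) (by omega)
      ⟨i, Nat.lt_succ_iff.1 i.isLt, by simpa [x] using hi⟩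
  exact ⟨hbounds, fun i j => by linarith [(hbounds i).2, (hbounds j).1]⟩
end

section
/- Let n ≥ 3 and let α ∈ ℂ with |α|² = 2. Let A be the n×n Hermitian matrix with A_{1,2} = α, A_{2,1} = conj(α), A_{j,j+1} = A_{j+1,j} = 1 for 2 ≤ j ≤ n−1, A_{n,n} = 1, and all other entries 0. Then det(A + 2I) = 4. -/
/-!
Expanding `det (A + 2I)` along its first row and then along the first column of the surviving
minor gives `2 · D (n - 1) - |α|² · D (n - 2)`, where `D k` is the determinant of `B + 2I` for the
unweighted path `B` on `k` vertices with charge `+1` on its last vertex. The same expansion shows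
that `D` satisfies `D (k + 2) = 2 D (k + 1) - D k` with `D 0 = 1`, `D 1 = 3`, so `D k = 2k + 1` and
`det (A + 2I) = 2 (2n - 1) - 2 (2n - 3) = 4`.
-/

open Matrix

theorem Matrix.det_of_tridiagonal_head {R : Type*} [CommRing R] {k : ℕ}
    (M : Matrix (Fin (k + 2)) (Fin (k + 2)) R)
    (hrow : ∀ j : Fin k, M 0 j.succ.succ = 0) (hcol : ∀ i : Fin k, M i.succ.succ 0 = 0) :
    M.det = M 0 0 * (M.submatrix Fin.succ Fin.succ).det -
      M 0 1 * M 1 0 * ((M.submatrix Fin.succ Fin.succ).submatrix Fin.succ Fin.succ).det := by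
  have hminor : (M.submatrix Fin.succ (Fin.succAbove 1)).det =
      M 1 0 * ((M.submatrix Fin.succ Fin.succ).submatrix Fin.succ Fin.succ).det := by
    rw [det_succ_column_zero, Fin.sum_univ_succ]
    simp [hcol, Fin.succAbove_zero, submatrix_submatrix, Function.comp_def]
  rw [det_succ_row_zero, Fin.sum_univ_succ, Fin.sum_univ_succ]
  simp [hrow, hminor, Fin.succAbove_zero]
  ring

-- `B + 2I` for the unweighted path `B` on `k` vertices with charge `+1` on its last vertex.
def chargedPathMatrix (k : ℕ) : Matrix (Fin k) (Fin k) ℂ :=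
  Matrix.of fun i j =>
    if (i : ℕ) = j then (if (i : ℕ) = k - 1 then 3 else 2)
    else if (j : ℕ) = i + 1 ∨ (i : ℕ) = j + 1 then 1
    else 0

theorem chargedPathMatrix_submatrix_succ (k : ℕ) :
    (chargedPathMatrix (k + 1)).submatrix Fin.succ Fin.succ = chargedPathMatrix k := by
  ext i j
  have := i.isLt
  simp only [chargedPathMatrix, submatrix_apply, of_apply, Fin.val_succ]
  split_ifs <;> first | rfl | omega

theorem det_chargedPathMatrix : ∀ k : ℕ, (chargedPathMatrix k).det = 2 * k + 1
  | 0 => by simp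
  | 1 => by norm_num [chargedPathMatrix]
  | k + 2 => by
    obtain ⟨h00, h01, h10⟩ : chargedPathMatrix (k + 2) 0 0 = 2 ∧
        chargedPathMatrix (k + 2) 0 1 = 1 ∧ chargedPathMatrix (k + 2) 1 0 = 1 := by
      simp [chargedPathMatrix]
    rw [det_of_tridiagonal_head _ (fun _ => by simp [chargedPathMatrix])
        (fun _ => by simp [chargedPathMatrix]),
      chargedPathMatrix_submatrix_succ, chargedPathMatrix_submatrix_succ,
      det_chargedPathMatrix (k + 1), det_chargedPathMatrix k, h00, h01, h10]
    push_cast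
    ring

/-- for the template 𝒫ₙ (path with first edge-weight α, |α|² = 2,
remaining edge-weights 1, and charge +1 on the last vertex), det(A + 2I) = 4. -/
theorem stmt_7 (n : ℕ) (hn : 3 ≤ n) (α : ℂ) (hα : ‖α‖ ^ 2 = 2)
    (A : Matrix (Fin n) (Fin n) ℂ)
    (hAdef : ∀ i j : Fin n, A i j =
      if (i : ℕ) = 0 ∧ (j : ℕ) = 1 then α
      else if (i : ℕ) = 1 ∧ (j : ℕ) = 0 then starRingEnd ℂ α
      else if 1 ≤ (i : ℕ) ∧ (j : ℕ) = (i : ℕ) + 1 then 1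
      else if 1 ≤ (j : ℕ) ∧ (i : ℕ) = (j : ℕ) + 1 then 1
      else if (i : ℕ) = n - 1 ∧ (j : ℕ) = n - 1 then 1
      else 0) :
    (A + (2 : ℂ) • (1 : Matrix (Fin n) (Fin n) ℂ)).det = 4 := by
  obtain ⟨m, rfl⟩ : ∃ m, n = m + 3 := ⟨n - 3, by omega⟩
  have hentry (i j : Fin (m + 3)) :
      (A + (2 : ℂ) • 1) i j = A i j + if (i : ℕ) = j then 2 else 0 := by
    simp [one_apply, Fin.ext_iff]
  have htail : (A + (2 : ℂ) • 1).submatrix Fin.succ Fin.succ = chargedPathMatrix (m + 2) := by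
    ext i j
    have := i.isLt
    simp [hentry, hAdef, chargedPathMatrix]
    split_ifs <;> first | omega | norm_num
  obtain ⟨h00, h01, h10⟩ : (A + (2 : ℂ) • 1) 0 0 = 2 ∧ (A + (2 : ℂ) • 1) 0 1 = α ∧
      (A + (2 : ℂ) • 1) 1 0 = starRingEnd ℂ α := by
    simp [hentry, hAdef]
  have hnormSq : α * starRingEnd ℂ α = 2 := by
    rw [Complex.mul_conj, Complex.normSq_eq_norm_sq, hα]
    norm_num
  rw [det_of_tridiagonal_head _ (fun _ => by simp [hentry, hAdef])
      (fun _ => by simp [hentry, hAdef]),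
    htail, chargedPathMatrix_submatrix_succ, det_chargedPathMatrix, det_chargedPathMatrix,
    h00, h01, h10, hnormSq]
  push_cast
  ring
end

section
/- Let n ≥ 3 and let α ∈ ℂ with |α| = 1. Let A be the n×n Hermitian matrix of the n-cycle with A_{j,j+1} = A_{j+1,j} = 1 for 1 ≤ j ≤ n−1, A_{1,n} = α, A_{n,1} = conj(α), and all other entries 0. Then det(A + 2I) = 2 − (−1)ⁿ·(α + conj(α)). -/
/-!
With `S` the cyclic shift whose closing edge carries the weight `conj α`, the matrix is
`A = S + Sᴴ`, and `S` is unitary because `|α| = 1`. Hence `A + 2 = (1 + S)(1 + S)ᴴ` and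
`det (A + 2) = |det (1 + S)|²`. Expanding `det (1 + S)` along the first column leaves two
unitriangular minors, so `det (1 + S) = 1 + (-1)ⁿ⁻¹ conj α`, and `|1 - (-1)ⁿ conj α|² =
2 - (-1)ⁿ (α + conj α)`.
-/

open Matrix

theorem Fin.eq_add_one_iff_val {m : ℕ} {i j : Fin (m + 1)} :
    j = i + 1 ↔ ((i : ℕ) = m ∧ (j : ℕ) = 0) ∨ (j : ℕ) = i + 1 := by
  have := j.isLt
  rw [Fin.ext_iff, Fin.val_add_one]
  split_ifs with h <;> rw [Fin.ext_iff, Fin.val_last] at h <;> omega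

namespace Matrix

variable {R n : Type*} {m : ℕ}

theorem one_add_mul_conjTranspose_one_add [Fintype n] [DecidableEq n] [Semiring R] [StarRing R]
    {S : Matrix n n R} (hS : S * Sᴴ = 1) : (1 + S) * (1 + S)ᴴ = S + Sᴴ + (2 : R) • 1 := by
  rw [conjTranspose_add, conjTranspose_one, add_mul, one_mul, mul_add, mul_one, hS, two_smul]
  abel

def cycleShift [Zero R] [One R] (m : ℕ) (w : R) : Matrix (Fin (m + 1)) (Fin (m + 1)) R :=
  of fun i j => if j = i + 1 then (if i = Fin.last m then w else 1) else 0

theorem cycleShift_apply_val [Zero R] [One R] (w : R) (i j : Fin (m + 1)) :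
    cycleShift m w i j =
      if (j : ℕ) = i + 1 then 1 else if (i : ℕ) = m ∧ (j : ℕ) = 0 then w else 0 := by
  have := i.isLt
  simp only [cycleShift, of_apply, Fin.eq_add_one_iff_val]
  simp only [Fin.ext_iff, Fin.val_last]
  split_ifs <;> first | rfl | omega

theorem cycleShift_mul_conjTranspose [Semiring R] [StarRing R] {w : R} (hw : w * star w = 1) :
    cycleShift m w * (cycleShift m w)ᴴ = 1 := by
  ext i j
  simp only [mul_apply, conjTranspose_apply, cycleShift, of_apply, ite_mul, zero_mul,
    Finset.sum_ite_eq', Finset.mem_univ, if_true, one_apply, add_left_inj]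
  split_ifs <;> simp_all

theorem one_add_cycleShift_apply_val [AddMonoidWithOne R] (w : R) (i j : Fin (m + 1)) :
    (1 + cycleShift m w) i j = (if (i : ℕ) = j then 1 else 0) +
      if (j : ℕ) = i + 1 then 1 else if (i : ℕ) = m ∧ (j : ℕ) = 0 then w else 0 := by
  rw [add_apply, one_apply, cycleShift_apply_val]
  simp only [Fin.ext_iff]

theorem det_submatrix_succ_succ_one_add_cycleShift [CommRing R] (w : R) :
    ((1 + cycleShift (m + 1) w).submatrix Fin.succ Fin.succ).det = 1 := by
  rw [det_of_isUpperTriangular]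
  · refine Finset.prod_eq_one fun i _ => ?_
    rw [submatrix_apply, one_add_cycleShift_apply_val]
    simp
  · intro i j (hij : (j : ℕ) < i)
    rw [submatrix_apply, one_add_cycleShift_apply_val]
    simp only [Fin.val_succ]
    split_ifs <;> (try simp at *) <;> omega

theorem det_submatrix_castSucc_succ_one_add_cycleShift [CommRing R] (w : R) :
    ((1 + cycleShift (m + 1) w).submatrix Fin.castSucc Fin.succ).det = 1 := by
  rw [det_of_isLowerTriangular]
  · refine Finset.prod_eq_one fun i _ => ?_
    rw [submatrix_apply, one_add_cycleShift_apply_val]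
    simp
  · intro i j (hij : (i : ℕ) < j)
    rw [submatrix_apply, one_add_cycleShift_apply_val]
    have := j.isLt
    simp only [Fin.val_succ, Fin.val_castSucc]
    split_ifs <;> (try simp at *) <;> omega

theorem det_one_add_cycleShift [CommRing R] (w : R) :
    det (1 + cycleShift m w) = 1 + (-1) ^ m * w := by
  cases m with
  | zero => simp [det_unique, cycleShift]
  | succ k =>
    have hcol : ∀ i : Fin (k + 2), (1 + cycleShift (k + 1) w) i 0 =
        if (i : ℕ) = 0 then 1 else if (i : ℕ) = k + 1 then w else 0 := by
      intro i
      rw [one_add_cycleShift_apply_val]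
      simp only [Fin.val_zero, and_true]
      split_ifs <;> simp_all
    rw [det_succ_column_zero, ← Finset.sum_subset (Finset.subset_univ {0, Fin.last (k + 1)}),
      Finset.sum_pair]
    · simp [hcol, det_submatrix_succ_succ_one_add_cycleShift,
        det_submatrix_castSucc_succ_one_add_cycleShift]
    · exact (Fin.last_pos).ne
    · intro i _ hi
      simp only [Finset.mem_insert, Finset.mem_singleton, not_or, Fin.ext_iff, Fin.val_zero,
        Fin.val_last] at hi
      simp [hcol, hi]

theorem cycleShift_add_conjTranspose_apply_val [Semiring R] [StarRing R] (hm : 2 ≤ m) (w : R)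
    (i j : Fin (m + 1)) :
    (cycleShift m w + (cycleShift m w)ᴴ) i j =
      if (i : ℕ) = 0 ∧ (j : ℕ) = m then star w
      else if (i : ℕ) = m ∧ (j : ℕ) = 0 then w
      else if (j : ℕ) = i + 1 then 1
      else if (i : ℕ) = j + 1 then 1
      else 0 := by
  have := i.isLt
  have := j.isLt
  rw [add_apply, conjTranspose_apply, cycleShift_apply_val, cycleShift_apply_val]
  split_ifs <;> first | omega | simp

end Matrix

/-- for the template 𝒬ₙ (uncharged n-cycle with one edge-weight α of
absolute value 1 and all other edge-weights 1), det(A + 2I) = 2 - (-1)ⁿ(α + conj α). -/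
theorem stmt_8 (n : ℕ) (hn : 3 ≤ n) (α : ℂ) (hα : ‖α‖ = 1)
    (A : Matrix (Fin n) (Fin n) ℂ)
    (hAdef : ∀ i j : Fin n, A i j =
      if (i : ℕ) = 0 ∧ (j : ℕ) = n - 1 then α
      else if (i : ℕ) = n - 1 ∧ (j : ℕ) = 0 then starRingEnd ℂ α
      else if (j : ℕ) = (i : ℕ) + 1 then 1
      else if (i : ℕ) = (j : ℕ) + 1 then 1
      else 0) :
    (A + (2 : ℂ) • (1 : Matrix (Fin n) (Fin n) ℂ)).det =
      2 - (-1) ^ n * (α + starRingEnd ℂ α) := by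
  obtain ⟨m, rfl⟩ : ∃ m, n = m + 1 := ⟨n - 1, by omega⟩
  set S := cycleShift m (starRingEnd ℂ α)
  have hA : A = S + Sᴴ := by
    ext i j
    rw [hAdef, cycleShift_add_conjTranspose_apply_val (by omega)]
    simp
  have hunit : starRingEnd ℂ α * α = 1 := by
    rw [Complex.conj_mul', hα]
    norm_num
  have hsign : ((-1 : ℂ) ^ m) ^ 2 = 1 := by
    rw [← pow_mul, mul_comm, pow_mul, neg_one_sq, one_pow]
  rw [hA, ← one_add_mul_conjTranspose_one_add (cycleShift_mul_conjTranspose (by simpa)), det_mul,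
    det_conjTranspose, det_one_add_cycleShift]
  simp only [star_add, star_one, star_mul', star_pow, star_neg, Complex.star_def,
    Complex.conj_conj]
  linear_combination ((-1 : ℂ) ^ m) ^ 2 * hunit + hsign
end

section
/- Let n ≥ 3 and let α ∈ ℂ with |α| = 1 and α ∉ ℝ. Let A be the n×n Hermitian matrix of the n-cycle with A_{j,j+1} = A_{j+1,j} = 1 for 1 ≤ j ≤ n−1, A_{1,n} = α, A_{n,1} = conj(α), and all other entries 0. Then every eigenvalue of A lies in the open interval (−2, 2); in particular the span of A is less than 4. -/
/-!
Write `A = S + Sᴴ`, where `S` is the cyclic shift with the twist `conj α` on the wrap-around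
edge. Since `|α| = 1`, `S` is unitary, hence `2 - A = (1 - S)ᴴ (1 - S)` and
`2 + A = (1 + S)ᴴ (1 + S)`. Both are positive definite as soon as `±1` are not eigenvalues of `S`;
and an eigenvalue `c` of `S` satisfies `c ^ n = conj α`, which is not real.
-/

open Matrix ComplexConjugate
open scoped ComplexOrder

namespace Matrix.IsHermitian

variable {ι 𝕜 : Type*} [Fintype ι] [DecidableEq ι] [RCLike 𝕜] {A : Matrix ι ι 𝕜}

lemma star_eigenvectorBasis_dotProduct_self (hA : A.IsHermitian) (i : ι) :
    star ⇑(hA.eigenvectorBasis i) ⬝ᵥ ⇑(hA.eigenvectorBasis i) = 1 := by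
  rw [dotProduct_comm, ← EuclideanSpace.inner_eq_star_dotProduct, inner_self_eq_norm_sq_to_K,
    hA.eigenvectorBasis.orthonormal.1 i]
  simp

lemma eigenvectorBasis_ne_zero (hA : A.IsHermitian) (i : ι) : ⇑(hA.eigenvectorBasis i) ≠ 0 := by
  have := hA.eigenvectorBasis.orthonormal.ne_zero i
  contrapose! this
  ext j
  simp [this]

lemma eigenvalues_lt_of_posDef_smul_one_sub (hA : A.IsHermitian) {c : ℝ}
    (h : (c • 1 - A).PosDef) (i : ι) : hA.eigenvalues i < c := by
  have := h.re_dotProduct_pos (hA.eigenvectorBasis_ne_zero i)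
  rw [sub_mulVec, dotProduct_sub, map_sub, ← hA.eigenvalues_eq, smul_mulVec, one_mulVec,
    dotProduct_smul, star_eigenvectorBasis_dotProduct_self] at this
  simpa [RCLike.smul_re] using this

lemma neg_lt_eigenvalues_of_posDef_smul_one_add (hA : A.IsHermitian) {c : ℝ}
    (h : (c • 1 + A).PosDef) (i : ι) : -c < hA.eigenvalues i := by
  have := h.re_dotProduct_pos (hA.eigenvectorBasis_ne_zero i)
  rw [add_mulVec, dotProduct_add, map_add, ← hA.eigenvalues_eq, smul_mulVec, one_mulVec,
    dotProduct_smul, star_eigenvectorBasis_dotProduct_self] at this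
  simp only [RCLike.smul_re, RCLike.one_re, mul_one] at this
  linarith

end Matrix.IsHermitian

namespace Matrix

variable {ι 𝕜 : Type*} [Fintype ι] [DecidableEq ι] [RCLike 𝕜] {S : Matrix ι ι 𝕜}

lemma posDef_two_smul_one_sub_add_conjTranspose (hS : Sᴴ * S = 1)
    (hfix : ∀ v, S *ᵥ v = v → v = 0) : ((2 : ℝ) • 1 - (S + Sᴴ)).PosDef := by
  have : (2 : ℝ) • 1 - (S + Sᴴ) = (1 - S)ᴴ * (1 - S) := by
    rw [conjTranspose_sub, conjTranspose_one, sub_mul, mul_sub, mul_sub, hS, Matrix.one_mul,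
      Matrix.one_mul, Matrix.mul_one]
    module
  rw [this]
  refine PosDef.conjTranspose_mul_self _ ((injective_iff_map_eq_zero (1 - S).mulVecLin).2 ?_)
  intro v hv
  exact hfix v (by simpa [sub_mulVec, sub_eq_zero, eq_comm] using hv)

lemma posDef_two_smul_one_add_add_conjTranspose (hS : Sᴴ * S = 1)
    (hfix : ∀ v, S *ᵥ v = -v → v = 0) : ((2 : ℝ) • 1 + (S + Sᴴ)).PosDef := by
  have : (2 : ℝ) • 1 + (S + Sᴴ) = (2 : ℝ) • 1 - (-S + (-S)ᴴ) := by
    rw [conjTranspose_neg]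
    abel
  rw [this]
  refine posDef_two_smul_one_sub_add_conjTranspose (by simpa using hS) fun v hv => hfix v ?_
  rwa [neg_mulVec, neg_eq_iff_eq_neg] at hv

end Matrix

noncomputable def twistedShift (n : ℕ) (α : ℂ) : Matrix (Fin n) (Fin n) ℂ :=
  (finRotate n).permMatrix ℂ * diagonal fun j : Fin n => if (j : ℕ) = 0 then conj α else 1

def twistedCycleMatrix (n : ℕ) (α : ℂ) : Matrix (Fin n) (Fin n) ℂ :=
  of fun i j =>
    if (i : ℕ) = 0 ∧ (j : ℕ) = n - 1 then α
    else if (i : ℕ) = n - 1 ∧ (j : ℕ) = 0 then conj α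
    else if (j : ℕ) = (i : ℕ) + 1 then 1
    else if (i : ℕ) = (j : ℕ) + 1 then 1
    else 0

section TwistedShift

variable {n : ℕ} {α : ℂ}

lemma twistedShift_apply (i j : Fin n) :
    twistedShift n α i j =
      if finRotate n i = j then (if (j : ℕ) = 0 then conj α else 1) else 0 := by
  simp only [twistedShift, mul_diagonal, PEquiv.toMatrix_apply, Equiv.toPEquiv_apply,
    Option.mem_def, Option.some_inj, ite_mul, one_mul, zero_mul]

lemma twistedShift_mulVec (v : Fin n → ℂ) (i : Fin n) :
    (twistedShift n α *ᵥ v) i =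
      (if (finRotate n i : ℕ) = 0 then conj α else 1) * v (finRotate n i) := by
  rw [twistedShift, ← mulVec_mulVec, permMatrix_mulVec, Function.comp_apply, mulVec_diagonal]

lemma conjTranspose_twistedShift_mul_self (hα : ‖α‖ = 1) :
    (twistedShift n α)ᴴ * twistedShift n α = 1 := by
  rw [twistedShift, conjTranspose_mul, conjTranspose_permMatrix, Matrix.mul_assoc,
    ← Matrix.mul_assoc (Equiv.Perm.permMatrix _ _), ← permMatrix_mul, mul_inv_cancel,
    permMatrix_one, Matrix.one_mul, diagonal_conjTranspose, diagonal_mul_diagonal, ← diagonal_one]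
  congr 1
  ext j
  by_cases hj : (j : ℕ) = 0 <;> simp [hj, Complex.mul_conj', hα]

lemma twistedShift_add_conjTranspose (hn : 3 ≤ n) :
    twistedShift n α + (twistedShift n α)ᴴ = twistedCycleMatrix n α := by
  obtain ⟨m, rfl⟩ : ∃ m, n = m + 1 := ⟨n - 1, by omega⟩
  ext i j
  simp only [Matrix.add_apply, conjTranspose_apply, twistedShift_apply, twistedCycleMatrix,
    of_apply, Fin.ext_iff, coe_finRotate, Fin.val_last]
  split_ifs <;> first | omega | simp

lemma pow_eq_conj_of_twistedShift_mulVec_eq_smul {m : ℕ} {c : ℂ} {v : Fin (m + 1) → ℂ}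
    (hv : twistedShift (m + 1) α *ᵥ v = c • v) (hv0 : v ≠ 0) : c ^ (m + 1) = conj α := by
  have step : ∀ k (hk : k < m), v ⟨k + 1, by omega⟩ = c * v ⟨k, by omega⟩ := fun k hk => by
    simpa [twistedShift_mulVec, finRotate_of_lt hk] using congrFun hv ⟨k, by omega⟩
  have geom : ∀ k (hk : k ≤ m), v ⟨k, by omega⟩ = c ^ k * v 0 := by
    intro k hk
    induction k with
    | zero => simp
    | succ k ih => rw [step k (by omega), ih (by omega), pow_succ]; ring
  have wrap : conj α * v 0 = c * v (Fin.last m) := by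
    simpa [twistedShift_mulVec] using congrFun hv (Fin.last m)
  have hv00 : v 0 ≠ 0 := by
    contrapose! hv0
    funext i
    simpa [hv0] using geom i i.is_le
  refine mul_right_cancel₀ hv00 ?_
  rw [wrap, show Fin.last m = ⟨m, by omega⟩ from rfl, geom m le_rfl, pow_succ]
  ring

lemma eq_zero_of_twistedShift_mulVec_eq_ofReal_smul {m : ℕ} (hα : α.im ≠ 0) {r : ℝ}
    {v : Fin (m + 1) → ℂ} (hv : twistedShift (m + 1) α *ᵥ v = (r : ℂ) • v) : v = 0 := by
  by_contra hv0
  have := congrArg Complex.im (pow_eq_conj_of_twistedShift_mulVec_eq_smul hv hv0)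
  rw [← Complex.ofReal_pow, Complex.ofReal_im, Complex.conj_im] at this
  exact hα (by linarith)

end TwistedShift

/-- the template 𝒬ₙ (uncharged n-cycle with one edge-weight α,
|α| = 1, α irrational/non-real, and all other edge-weights 1) has all eigenvalues
in the open interval (-2, 2); in particular it has span less than 4. -/
theorem stmt_9 (n : ℕ) (hn : 3 ≤ n) (α : ℂ) (hα : ‖α‖ = 1)
    (hαnr : α.im ≠ 0)
    (A : Matrix (Fin n) (Fin n) ℂ)
    (hAdef : ∀ i j : Fin n, A i j =
      if (i : ℕ) = 0 ∧ (j : ℕ) = n - 1 then α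
      else if (i : ℕ) = n - 1 ∧ (j : ℕ) = 0 then starRingEnd ℂ α
      else if (j : ℕ) = (i : ℕ) + 1 then 1
      else if (i : ℕ) = (j : ℕ) + 1 then 1
      else 0)
    (hA : A.IsHermitian) :
    (∀ i, hA.eigenvalues i ∈ Set.Ioo (-2 : ℝ) 2) ∧
    (∀ i j, hA.eigenvalues i - hA.eigenvalues j < 4) := by
  obtain ⟨m, rfl⟩ : ∃ m, n = m + 1 := ⟨n - 1, by omega⟩
  have hAS : A = twistedShift (m + 1) α + (twistedShift (m + 1) α)ᴴ := by
    rw [twistedShift_add_conjTranspose hn]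
    exact Matrix.ext hAdef
  have hS := conjTranspose_twistedShift_mul_self (n := m + 1) hα
  have hupper : ((2 : ℝ) • 1 - A).PosDef := by
    rw [hAS]
    refine posDef_two_smul_one_sub_add_conjTranspose hS fun v hv =>
      eq_zero_of_twistedShift_mulVec_eq_ofReal_smul hαnr (r := 1) ?_
    simpa using hv
  have hlower : ((2 : ℝ) • 1 + A).PosDef := by
    rw [hAS]
    refine posDef_two_smul_one_add_add_conjTranspose hS fun v hv =>
      eq_zero_of_twistedShift_mulVec_eq_ofReal_smul hαnr (r := -1) ?_
    simpa using hv
  have hbounds : ∀ i, hA.eigenvalues i ∈ Set.Ioo (-2 : ℝ) 2 := fun i =>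
    ⟨hA.neg_lt_eigenvalues_of_posDef_smul_one_add hlower i,
      hA.eigenvalues_lt_of_posDef_smul_one_sub hupper i⟩
  exact ⟨hbounds, fun i j => by linarith [(hbounds i).2, (hbounds j).1]⟩
end
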